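/- arXiv:2509.17778 — 6 statements merged into one kernel-verified Lean document; each statement's English description precedes it below -/
import Mathlib

section
/- For every real z with -e^{-1} < z < 0, the lower branch W_{-1} of the Lambert W function is differentiable at z with derivative W_{-1}'(z) = W_{-1}(z) / (z(1 + W_{-1}(z))). -/
open Real Filter Topology Set

private lemma fderiv_we (w : ℝ) : HasDerivAt (fun w : ℝ => w * Real.exp w)
    ((1 + w) * Real.exp w) w := by
  have := (hasDerivAt_id w).mul (Real.hasDerivAt_exp w)
  refine this.congr_deriv ?_
  simp
  ring

private lemma f_strictAnti : StrictAntiOn (fun w : ℝ => w * Real.exp w) (Set.Iic (-1)) := by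
  apply strictAntiOn_of_deriv_neg (convex_Iic _)
  · exact (continuous_id.mul Real.continuous_exp).continuousOn
  · intro x hx
    rw [interior_Iic] at hx
    rw [(fderiv_we x).deriv]
    have : 1 + x < 0 := by linarith [hx.out]
    exact mul_neg_of_neg_of_pos this (Real.exp_pos x)

theorem stmt1 (W : ℝ → ℝ) (hW : ∀ z : ℝ, -Real.exp (-1) ≤ z → z < 0 → W z * Real.exp (W z) = z ∧ W z ≤ -1) :
    ∀ z : ℝ, -Real.exp (-1) < z → z < 0 →
      HasDerivAt W (W z / (z * (1 + W z))) z := by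
  intro z hz1 hz2
  obtain ⟨hfz, hle⟩ := hW z hz1.le hz2
  -- W z < -1
  have hWlt : W z < -1 := by
    rcases lt_or_eq_of_le hle with h | h
    · exact h
    · exfalso
      rw [h] at hfz
      rw [Real.exp_neg] at hz1
      simp [Real.exp_neg] at hfz
      linarith
  have h1W : 1 + W z < 0 := by linarith
  -- membership facts
  have hmem : ∀ w : ℝ, w < -1 → -Real.exp (-1) < w * Real.exp w ∧ w * Real.exp w < 0 := by
    intro w hw
    constructor
    · have := f_strictAnti hw.le (le_refl (-1 : ℝ)) hw
      simpa using this
    · exact mul_neg_of_neg_of_pos (by linarith) (Real.exp_pos w)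
  -- W is injective image: W '' Ioo ⊇ Iio (-1)
  have himg : Set.Iio (-1 : ℝ) ⊆ W '' Set.Ioo (-Real.exp (-1)) 0 := by
    intro w hw
    have hw' : w < -1 := hw
    obtain ⟨hm1, hm2⟩ := hmem w hw'
    refine ⟨w * Real.exp w, ⟨hm1, hm2⟩, ?_⟩
    obtain ⟨hfy, hley⟩ := hW _ hm1.le hm2
    exact f_strictAnti.injOn hley hw'.le hfy
  -- strict antitonicity of W on Ioo
  have hanti : StrictAntiOn W (Set.Ioo (-Real.exp (-1)) 0) := by
    intro a ha b hb hab
    obtain ⟨hfa, hlea⟩ := hW a ha.1.le ha.2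
    obtain ⟨hfb, hleb⟩ := hW b hb.1.le hb.2
    rcases lt_trichotomy (W b) (W a) with h | h | h
    · exact h
    · exfalso; rw [h] at hfb; rw [hfa] at hfb; linarith
    · exfalso
      have h2 := f_strictAnti hlea hleb h
      simp only [hfa, hfb] at h2
      linarith
  -- continuity of W at z
  have hcont : ContinuousAt W z := by
    have hmono : StrictMonoOn (fun y => -W y) (Set.Ioo (-Real.exp (-1)) 0) := by
      intro a ha b hb hab
      simpa using hanti ha hb hab
    have hzmem : z ∈ Set.Ioo (-Real.exp (-1)) 0 := ⟨hz1, hz2⟩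
    have hnbhd : Set.Ioo (-Real.exp (-1)) 0 ∈ 𝓝 z := isOpen_Ioo.mem_nhds hzmem
    have himg' : (fun y => -W y) '' Set.Ioo (-Real.exp (-1)) 0 ∈ 𝓝 (-W z) := by
      have h1 : Set.Ioi (1 : ℝ) ⊆ (fun y => -W y) '' Set.Ioo (-Real.exp (-1)) 0 := by
        intro x hx
        simp only [Set.mem_Ioi] at hx
        have hx' : -x ∈ Set.Iio (-1 : ℝ) := by simp only [Set.mem_Iio]; linarith
        obtain ⟨y, hy, hWy⟩ := himg hx'
        exact ⟨y, hy, by simp [hWy]⟩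
      exact Filter.mem_of_superset (isOpen_Ioi.mem_nhds (by simp only [Set.mem_Ioi]; linarith)) h1
    have := hmono.continuousAt_of_image_mem_nhds hnbhd himg'
    have h2 : ContinuousAt (fun y => -(-W y)) z := this.neg
    simpa using h2
  -- local left inverse
  have hfg : ∀ᶠ y in 𝓝 z, W y * Real.exp (W y) = y := by
    filter_upwards [isOpen_Ioo.mem_nhds (⟨hz1, hz2⟩ : z ∈ Set.Ioo (-Real.exp (-1)) 0)] with y hy
    exact (hW y hy.1.le hy.2).1
  have hderiv : HasDerivAt (fun w : ℝ => w * Real.exp w) ((1 + W z) * Real.exp (W z)) (W z) :=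
    fderiv_we (W z)
  have hne : (1 + W z) * Real.exp (W z) ≠ 0 :=
    (mul_neg_of_neg_of_pos h1W (Real.exp_pos _)).ne
  have := HasDerivAt.of_local_left_inverse hcont hderiv hne hfg
  refine this.congr_deriv (Eq.symm ?_)
  have hWne : W z ≠ 0 := by linarith
  have hexp := (Real.exp_pos (W z)).ne'
  have hzne : z ≠ 0 := hz2.ne
  have h1Wne : 1 + W z ≠ 0 := h1W.ne
  field_simp
  linear_combination hfz
end

section
/- The function G(x) = e^{1 + x + W_{-1}(-e^{-1-x})} - W_{-1}(-e^{-1-x}) - x - 2 satisfies lim_{x -> 0+} G(x)/x = 1. -/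
open Real Filter Topology Set

noncomputable def G (W : ℝ → ℝ) (x : ℝ) : ℝ :=
  Real.exp (1 + x + W (-Real.exp (-1 - x))) - W (-Real.exp (-1 - x)) - x - 2

lemma hasDerivAt_gfun (t : ℝ) (ht : -1 < t) :
    HasDerivAt (fun s : ℝ => s - Real.log (1 + s)) (1 - 1 / (1 + t)) t := by
  have h1 : HasDerivAt (fun s : ℝ => 1 + s) 1 t := by
    simpa using (hasDerivAt_id t).const_add 1
  have h2 : HasDerivAt (fun s : ℝ => Real.log (1 + s)) (1 / (1 + t)) t := by
    simpa using h1.log (by linarith)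
  exact (hasDerivAt_id' t).sub h2

lemma gfun_strictMono : StrictMonoOn (fun s : ℝ => s - Real.log (1 + s)) (Ici 0) := by
  apply strictMonoOn_of_deriv_pos (convex_Ici 0)
  · intro t ht
    exact (hasDerivAt_gfun t (by simpa using lt_of_lt_of_le (by norm_num) ht)).continuousAt.continuousWithinAt
  · intro t ht
    rw [interior_Ici] at ht
    have ht' : (0:ℝ) < t := ht
    rw [(hasDerivAt_gfun t (by linarith)).deriv]
    have h1 : (1:ℝ) / (1 + t) < 1 := by
      rw [div_lt_one (by linarith)]; linarith
    linarith

lemma gfun_pos {t : ℝ} (ht : 0 < t) : 0 < t - Real.log (1 + t) := by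
  have := Real.log_lt_sub_one_of_pos (x := 1 + t) (by linarith) (by linarith)
  linarith

lemma tendsto_h : Tendsto (fun t : ℝ => t ^ 2 / (t - Real.log (1 + t))) (𝓝[>] 0) (𝓝 2) := by
  apply HasDerivAt.lhopital_zero_nhdsGT (f' := fun t => 2 * t)
    (g' := fun t => 1 - 1 / (1 + t))
  · filter_upwards [self_mem_nhdsWithin] with t ht
    simpa using (hasDerivAt_pow 2 t)
  · filter_upwards [self_mem_nhdsWithin] with t (ht : (0:ℝ) < t)
    exact hasDerivAt_gfun t (by linarith)
  · filter_upwards [self_mem_nhdsWithin] with t (ht : (0:ℝ) < t)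
    have h1 : (1:ℝ) / (1 + t) < 1 := by rw [div_lt_one (by linarith)]; linarith
    intro h; rw [sub_eq_zero] at h; linarith
  · have : Tendsto (fun t : ℝ => t ^ 2) (𝓝 0) (𝓝 0) := by
      simpa using (continuous_pow 2).tendsto (0:ℝ)
    exact this.mono_left nhdsWithin_le_nhds
  · have : Tendsto (fun t : ℝ => t - Real.log (1 + t)) (𝓝 0) (𝓝 0) := by
      have : ContinuousAt (fun t : ℝ => t - Real.log (1 + t)) 0 :=
        (hasDerivAt_gfun 0 (by norm_num)).continuousAt
      simpa using this.tendsto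
    exact this.mono_left nhdsWithin_le_nhds
  · have h2 : Tendsto (fun t : ℝ => 2 * (1 + t)) (𝓝[>] (0:ℝ)) (𝓝 2) := by
      have hc : Continuous (fun t : ℝ => 2 * (1 + t)) := by continuity
      have : Tendsto (fun t : ℝ => 2 * (1 + t)) (𝓝 0) (𝓝 2) := by
        have := hc.tendsto (0:ℝ)
        norm_num at this
        exact this
      exact this.mono_left nhdsWithin_le_nhds
    apply h2.congr'
    filter_upwards [self_mem_nhdsWithin] with t (ht : (0:ℝ) < t)
    have h1t : (0:ℝ) < 1 + t := by linarith
    field_simp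
    rw [add_sub_cancel_left, div_self (ne_of_gt ht)]

theorem stmt6 (W : ℝ → ℝ) (hW : ∀ z : ℝ, -Real.exp (-1) ≤ z → z < 0 → W z * Real.exp (W z) = z ∧ W z ≤ -1) :
    Tendsto (fun x : ℝ => G W x / x) (𝓝[>] 0) (𝓝 1) := by
  set T : ℝ → ℝ := fun x => -1 - W (-Real.exp (-1 - x)) with hT
  -- basic facts for x > 0
  have key : ∀ x : ℝ, 0 < x → 0 < T x ∧ T x - Real.log (1 + T x) = x ∧
      G W x = (T x) ^ 2 / (1 + T x) - x := by
    intro x hx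
    set z : ℝ := -Real.exp (-1 - x) with hz
    have hz1 : -Real.exp (-1) ≤ z := by
      rw [hz, neg_le_neg_iff]
      exact Real.exp_le_exp.2 (by linarith)
    have hz2 : z < 0 := by
      rw [hz, neg_lt_zero]; exact Real.exp_pos _
    obtain ⟨hweq, hwle⟩ := hW z hz1 hz2
    set w : ℝ := W z with hwdef
    have hw0 : w < 0 := lt_of_le_of_lt hwle (by norm_num)
    have htw : T x = -1 - w := rfl
    have hTnn : 0 ≤ T x := by rw [htw]; linarith
    have h1T : 1 + T x = -w := by rw [htw]; ring
    have h1Tpos : (0:ℝ) < 1 + T x := by rw [h1T]; linarith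
    -- key relation: (1 + T x) * exp (-1 - T x) = exp (-1 - x)
    have hrel : (1 + T x) * Real.exp (-1 - T x) = Real.exp (-1 - x) := by
      have : -1 - T x = w := by rw [htw]; ring
      rw [h1T, this]
      have := hweq
      rw [hz] at this
      nlinarith [this]
    have hlog : Real.log (1 + T x) + (-1 - T x) = -1 - x := by
      have := congrArg Real.log hrel
      rwa [Real.log_mul (ne_of_gt h1Tpos) (Real.exp_ne_zero _), Real.log_exp,
        Real.log_exp] at this
    have heq : T x - Real.log (1 + T x) = x := by linarith
    have hTpos : 0 < T x := by
      rcases eq_or_lt_of_le hTnn with h | h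
      · exfalso
        have hx0 : x = 0 := by
          rw [← heq, ← h]
          norm_num
        linarith
      · exact h
    refine ⟨hTpos, heq, ?_⟩
    -- compute G
    have hexpw : Real.exp w = z / w := by
      rw [eq_div_iff (ne_of_lt hw0), mul_comm]
      exact hweq
    have hexp : Real.exp (1 + x + w) = -1 / w := by
      rw [Real.exp_add, hexpw, hz]
      have hprod : Real.exp (1 + x) * Real.exp (-1 - x) = 1 := by
        rw [← Real.exp_add]
        have : 1 + x + (-1 - x) = 0 := by ring
        rw [this, Real.exp_zero]
      have hr : Real.exp (1 + x) * (-Real.exp (-1 - x) / w) =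
          -(Real.exp (1 + x) * Real.exp (-1 - x)) / w := by ring
      rw [hr, hprod]
    show Real.exp (1 + x + w) - w - x - 2 = (T x) ^ 2 / (1 + T x) - x
    rw [hexp, htw]
    have hwne : w ≠ 0 := ne_of_lt hw0
    have hw' : (1:ℝ) + (-1 - w) = -w := by ring
    rw [hw']
    field_simp
    ring
  -- T tends to 0 within Ioi
  have hTt : Tendsto T (𝓝[>] 0) (𝓝[>] 0) := by
    rw [tendsto_nhdsWithin_iff]
    constructor
    · rw [tendsto_order]
      constructor
      · intro a ha
        filter_upwards [self_mem_nhdsWithin] with x (hx : (0:ℝ) < x)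
        exact lt_of_lt_of_le ha (le_of_lt (key x hx).1)
      · intro b hb
        have hgb : 0 < b - Real.log (1 + b) := gfun_pos hb
        filter_upwards [Ioo_mem_nhdsGT_of_mem (by constructor <;> [exact le_refl 0; exact hgb])]
          with x hx
        obtain ⟨hTpos, heq, _⟩ := key x hx.1
        by_contra hcon
        push_neg at hcon
        have := gfun_strictMono.monotoneOn (le_of_lt hb) (le_of_lt hTpos) hcon
        rw [heq] at this
        linarith [hx.2]
    · filter_upwards [self_mem_nhdsWithin] with x (hx : (0:ℝ) < x)
      exact (key x hx).1
  -- combine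
  have h1 : Tendsto (fun x => (T x) ^ 2 / (T x - Real.log (1 + T x))) (𝓝[>] 0) (𝓝 2) :=
    tendsto_h.comp hTt
  have h2 : Tendsto (fun x => 1 + T x) (𝓝[>] 0) (𝓝 1) := by
    have := (hTt.mono_right nhdsWithin_le_nhds).const_add 1
    simpa using this
  have h3 : Tendsto (fun x => (T x) ^ 2 / (T x - Real.log (1 + T x)) / (1 + T x) - 1)
      (𝓝[>] 0) (𝓝 1) := by
    have := (h1.div h2 (by norm_num)).sub_const 1
    norm_num at this
    exact this
  apply h3.congr'
  filter_upwards [self_mem_nhdsWithin] with x (hx : (0:ℝ) < x)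
  obtain ⟨hTpos, heq, hG⟩ := key x hx
  rw [hG, heq]
  have h1T : (0:ℝ) < 1 + T x := by linarith
  field_simp
end

section
/- As z -> 0 with z < 0, W_{-1}(z) is asymptotically equivalent to log(-z) - log(-log(-z)); that is, lim_{z -> 0^-} W_{-1}(z) / (log(-z) - log(-log(-z))) = 1. -/
open Real Filter Topology Set

set_option maxHeartbeats 1000000

lemma key_mono {C w : ℝ} (hC : C < w) (hw : w ≤ -1) :
    w * Real.exp w < C * Real.exp C := by
  have hd : w - C ≠ 0 := by intro h; linarith
  have h1 : (w - C) + 1 < Real.exp (w - C) := Real.add_one_lt_exp hd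
  have h2 : Real.exp (w - C) * Real.exp C = Real.exp w := by
    rw [← Real.exp_add]; ring_nf
  have h3 := Real.exp_pos C
  have h5 : (w - C + 1) * Real.exp C < Real.exp w := by
    calc (w - C + 1) * Real.exp C < Real.exp (w - C) * Real.exp C :=
          mul_lt_mul_of_pos_right h1 h3
      _ = Real.exp w := h2
  have h6 : w * Real.exp w < w * ((w - C + 1) * Real.exp C) :=
    mul_lt_mul_of_neg_left h5 (by linarith)
  have h7 : w * ((w - C + 1) * Real.exp C) ≤ C * Real.exp C := by
    have hnn : 0 ≤ (w - C) * (-(w + 1)) := mul_nonneg (by linarith) (by linarith)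
    nlinarith [mul_nonneg hnn h3.le]
  linarith

lemma exp_bound_min {D : ℝ} (hD1 : D ≤ -1) : -Real.exp (-1) ≤ D * Real.exp D := by
  rcases hD1.lt_or_eq with h | h
  · have := key_mono h (le_refl (-1 : ℝ))
    rw [neg_one_mul] at this
    exact this.le
  · rw [h, neg_one_mul]

lemma tendsto_aux :
    Tendsto (fun w : ℝ => w / (w + Real.log (-w) - Real.log (-(w + Real.log (-w)))))
      atBot (𝓝 1) := by
  have h1 : Tendsto (fun w : ℝ => Real.log (-w) / w) atBot (𝓝 0) := by
    have base : Tendsto (fun x : ℝ => Real.log x / x) atTop (𝓝 0) :=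
      Real.isLittleO_log_id_atTop.tendsto_div_nhds_zero
    have comp : Tendsto (fun w : ℝ => Real.log (-w) / (-w)) atBot (𝓝 0) :=
      base.comp tendsto_neg_atBot_atTop
    have : Tendsto (fun w : ℝ => -(Real.log (-w) / (-w))) atBot (𝓝 (-0)) := comp.neg
    simpa [div_neg] using this
  have hinv : Tendsto (fun w : ℝ => w⁻¹) atBot (𝓝 0) := by
    have := (tendsto_neg_atBot_atTop : Tendsto (fun w : ℝ => -w) atBot atTop).inv_tendsto_atTop.neg
    simpa [inv_neg] using this
  have h2 : Tendsto (fun w : ℝ => Real.log (1 + Real.log (-w) / w) / w) atBot (𝓝 0) := by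
    have hlog : Tendsto (fun w : ℝ => Real.log (1 + Real.log (-w) / w)) atBot (𝓝 0) := by
      have c : ContinuousAt Real.log (1 + 0) := Real.continuousAt_log (by norm_num)
      have := c.tendsto.comp (tendsto_const_nhds.add h1)
      rw [add_zero, Real.log_one] at this; exact this
    have := hlog.mul hinv
    simpa [div_eq_mul_inv] using this
  have h3 : Tendsto (fun w : ℝ => 1 / (1 - Real.log (1 + Real.log (-w) / w) / w))
      atBot (𝓝 (1 / (1 - 0))) :=
    tendsto_const_nhds.div (tendsto_const_nhds.sub h2) (by norm_num)
  rw [show (1:ℝ) / (1 - 0) = 1 by norm_num] at h3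
  refine h3.congr' ?_
  filter_upwards [eventually_lt_atBot (-1 : ℝ)] with w hw
  have hwneg : w < 0 := by linarith
  have hw0 : w ≠ 0 := ne_of_lt hwneg
  have hnw : (1:ℝ) < -w := by linarith
  have hlt : Real.log (-w) < -w :=
    (Real.log_lt_sub_one_of_pos (by linarith) (by linarith)).trans_le (by linarith)
  have hd1 : Real.log (-w) / (-w) < 1 := (div_lt_one (by linarith)).mpr hlt
  have hdivneg : Real.log (-w) / w = -(Real.log (-w) / (-w)) := by
    rw [div_neg, neg_neg]
  have hu : 0 < 1 + Real.log (-w) / w := by rw [hdivneg]; linarith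
  have hc : w * (Real.log (-w) / w) = Real.log (-w) := by field_simp
  have hfactor : -(w + Real.log (-w)) = (-w) * (1 + Real.log (-w) / w) := by
    linear_combination hc
  have hlogmul : Real.log (-(w + Real.log (-w)))
      = Real.log (-w) + Real.log (1 + Real.log (-w) / w) := by
    rw [hfactor, Real.log_mul (by linarith) (by linarith)]
  rw [hlogmul]
  rw [show w + Real.log (-w) - (Real.log (-w) + Real.log (1 + Real.log (-w) / w))
      = w - Real.log (1 + Real.log (-w) / w) by ring]
  rw [show (1:ℝ) - Real.log (1 + Real.log (-w) / w) / w
      = (w - Real.log (1 + Real.log (-w) / w)) / w by field_simp]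
  rw [one_div_div]

theorem stmt8 (W : ℝ → ℝ) (hW : ∀ z : ℝ, -Real.exp (-1) ≤ z → z < 0 → W z * Real.exp (W z) = z ∧ W z ≤ -1) :
    Tendsto (fun z : ℝ => W z / (Real.log (-z) - Real.log (-Real.log (-z))))
      (𝓝[<] 0) (𝓝 1) := by
  have hexp : -Real.exp (-1) < 0 := neg_neg_iff_pos.mpr (Real.exp_pos _)
  have hWbot : Tendsto W (𝓝[<] (0:ℝ)) atBot := by
    rw [tendsto_atBot]
    intro C
    set D := min C (-1) with hD
    have hD1 : D ≤ -1 := min_le_right _ _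
    have hDC : D ≤ C := min_le_left _ _
    have hDe : D * Real.exp D < 0 :=
      mul_neg_of_neg_of_pos (by linarith) (Real.exp_pos _)
    have hmem : Ioo (D * Real.exp D) 0 ∈ 𝓝[<] (0:ℝ) :=
      Ioo_mem_nhdsLT_of_mem ⟨hDe, le_refl 0⟩
    filter_upwards [hmem] with z hz
    have hzge : -Real.exp (-1) ≤ z := le_trans (exp_bound_min hD1) hz.1.le
    obtain ⟨heq, hle⟩ := hW z hzge hz.2
    by_contra h
    push_neg at h
    have hDW : D < W z := by linarith
    have := key_mono hDW hle
    rw [heq] at this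
    linarith [hz.1]
  have hcomp := tendsto_aux.comp hWbot
  refine hcomp.congr' ?_
  filter_upwards [Ioo_mem_nhdsLT_of_mem
    (show (0:ℝ) ∈ Ioc (-Real.exp (-1)) 0 from ⟨hexp, le_refl _⟩)] with z hz
  obtain ⟨heq, hle⟩ := hW z hz.1.le hz.2
  have hlogz : Real.log (-z) = W z + Real.log (-(W z)) := by
    have h1 : -z = (-(W z)) * Real.exp (W z) := by linarith [heq]
    rw [h1, Real.log_mul (by linarith) (Real.exp_ne_zero _), Real.log_exp]
    ring
  simp only [Function.comp_apply, hlogz]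
end

section
/- Suppose \mu : (0,\infty) -> (0,\infty) satisfies \gamma \mu(\gamma)^2 -> \infty as \gamma -> \infty. Define n(\gamma) = (2/\mu(\gamma)^2) G(\gamma \mu(\gamma)^2 / 2). Then n(\gamma) \mu(\gamma)^2 / (2 \log(\gamma \mu(\gamma)^2)) -> 1 as \gamma -> \infty. -/
open Real Filter Topology Set

lemma aux_ratio (c d : ℝ) : Tendsto (fun y : ℝ => (y + c) / (y + d)) atTop (𝓝 1) := by
  have hc : Tendsto (fun y : ℝ => 1 + c / y) atTop (𝓝 1) := by
    have := tendsto_const_nhds (α := ℝ) (x := (1:ℝ)) |>.add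
      ((tendsto_const_nhds (x := c)).div_atTop tendsto_id)
    simpa using this
  have hd : Tendsto (fun y : ℝ => 1 + d / y) atTop (𝓝 1) := by
    have := tendsto_const_nhds (α := ℝ) (x := (1:ℝ)) |>.add
      ((tendsto_const_nhds (x := d)).div_atTop tendsto_id)
    simpa using this
  have := hc.div hd one_ne_zero
  simp only [div_one] at this
  apply this.congr'
  filter_upwards [eventually_gt_atTop (max 0 (-d)), eventually_gt_atTop 0] with y hy hy0
  have hyd : 0 < y + d := by
    have := lt_of_le_of_lt (le_max_right 0 (-d)) hy; linarith
  rw [Pi.div_apply]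
  field_simp

lemma key (W : ℝ → ℝ)
    (hW : ∀ z : ℝ, -Real.exp (-1) ≤ z → z < 0 → W z * Real.exp (W z) = z ∧ W z ≤ -1) :
    Tendsto (fun x : ℝ => G W x / Real.log (2 * x)) atTop (𝓝 1) := by
  have hbound : ∀ x : ℝ, 1 ≤ x →
      Real.log x - 1 ≤ G W x ∧ G W x ≤ Real.log 4 + Real.log x := by
    intro x hx
    set z := -Real.exp (-1 - x) with hz
    have hz1 : -Real.exp (-1) ≤ z := by
      rw [hz, neg_le_neg_iff]
      exact Real.exp_le_exp.2 (by linarith)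
    have hz2 : z < 0 := by rw [hz]; simp [Real.exp_pos]
    obtain ⟨heq, hle⟩ := hW z hz1 hz2
    set u : ℝ := -W z with hu
    have hWz : W z = -u := by rw [hu, neg_neg]
    have hu1 : 1 ≤ u := by linarith
    have hupos : 0 < u := by linarith
    have heq2 : u * Real.exp (-u) = Real.exp (-1 - x) := by
      rw [hWz] at heq
      have : -u * Real.exp (-u) = -Real.exp (-1 - x) := heq
      linarith
    have hlog : Real.log u - u = -1 - x := by
      have h := congrArg Real.log heq2
      rwa [Real.log_mul (ne_of_gt hupos) (Real.exp_ne_zero _), Real.log_exp,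
        Real.log_exp] at h
    have hG : G W x = u⁻¹ + Real.log u - 1 := by
      have harg : 1 + x + -u = -Real.log u := by linarith
      rw [G, ← hz, hWz, harg, Real.exp_neg, Real.exp_log hupos]
      linarith
    have hlogu0 : 0 ≤ Real.log u := Real.log_nonneg hu1
    have hux : 1 + x ≤ u := by linarith
    have hloghalf : Real.log u ≤ u / 2 := by
      have h1 : Real.log (Real.sqrt u) ≤ Real.sqrt u - 1 :=
        Real.log_le_sub_one_of_pos (Real.sqrt_pos.2 hupos)
      have h2 : Real.log (Real.sqrt u) = Real.log u / 2 := Real.log_sqrt hupos.le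
      nlinarith [Real.sq_sqrt hupos.le, sq_nonneg (Real.sqrt u - 2)]
    have hu4x : u ≤ 4 * x := by linarith
    have hinv1 : u⁻¹ ≤ 1 := by
      rw [inv_le_one_iff₀]; right; exact hu1
    have hinvpos : 0 < u⁻¹ := by positivity
    constructor
    · have : Real.log x ≤ Real.log u :=
        Real.log_le_log (by linarith) (by linarith)
      linarith
    · have h4 : Real.log u ≤ Real.log (4 * x) :=
        Real.log_le_log hupos hu4x
      rw [Real.log_mul (by norm_num) (by linarith)] at h4
      linarith
  have hlow : Tendsto (fun x : ℝ => (Real.log x - 1) / Real.log (2 * x)) atTop (𝓝 1) := by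
    have := (aux_ratio (-1) (Real.log 2)).comp Real.tendsto_log_atTop
    apply this.congr'
    filter_upwards [eventually_gt_atTop 0] with x hx
    simp only [Function.comp]
    rw [Real.log_mul two_ne_zero (ne_of_gt hx)]
    ring_nf
  have hhigh : Tendsto (fun x : ℝ => (Real.log 4 + Real.log x) / Real.log (2 * x)) atTop (𝓝 1) := by
    have := (aux_ratio (Real.log 4) (Real.log 2)).comp Real.tendsto_log_atTop
    apply this.congr'
    filter_upwards [eventually_gt_atTop 0] with x hx
    simp only [Function.comp]
    rw [Real.log_mul two_ne_zero (ne_of_gt hx)]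
    ring_nf
  apply tendsto_of_tendsto_of_tendsto_of_le_of_le' hlow hhigh
  · filter_upwards [eventually_ge_atTop 1] with x hx
    have hpos : 0 < Real.log (2 * x) := Real.log_pos (by linarith)
    exact div_le_div_of_nonneg_right (hbound x hx).1 hpos.le
  · filter_upwards [eventually_ge_atTop 1] with x hx
    have hpos : 0 < Real.log (2 * x) := Real.log_pos (by linarith)
    exact div_le_div_of_nonneg_right (hbound x hx).2 hpos.le

theorem stmt12 (W : ℝ → ℝ) (hW : ∀ z : ℝ, -Real.exp (-1) ≤ z → z < 0 → W z * Real.exp (W z) = z ∧ W z ≤ -1)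
    (μ : ℝ → ℝ) (hμ : ∀ γ : ℝ, 0 < γ → 0 < μ γ)
    (hlim : Tendsto (fun γ : ℝ => γ * μ γ ^ 2) atTop atTop) :
    Tendsto (fun γ : ℝ =>
        ((2 / μ γ ^ 2) * G W (γ * μ γ ^ 2 / 2)) * μ γ ^ 2 /
          (2 * Real.log (γ * μ γ ^ 2))) atTop (𝓝 1) := by
  have h2 : Tendsto (fun γ : ℝ => γ * μ γ ^ 2 / 2) atTop atTop :=
    hlim.atTop_div_const two_pos
  have h3 : Tendsto (fun γ : ℝ => G W (γ * μ γ ^ 2 / 2) / Real.log (2 * (γ * μ γ ^ 2 / 2)))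
      atTop (𝓝 1) := (key W hW).comp h2
  apply h3.congr'
  filter_upwards [eventually_gt_atTop 0] with γ hγ
  have hμ' := hμ γ hγ
  have hμ2 : μ γ ^ 2 ≠ 0 := by positivity
  rw [show (2 : ℝ) * (γ * μ γ ^ 2 / 2) = γ * μ γ ^ 2 by ring,
    show 2 / μ γ ^ 2 * G W (γ * μ γ ^ 2 / 2) * μ γ ^ 2 = 2 * G W (γ * μ γ ^ 2 / 2) by
      field_simp,
    mul_div_mul_left _ _ (two_ne_zero)]
end

section
/- Let \mu(\gamma) = \gamma^{-\delta}, n(\gamma) = (2/\mu(\gamma)^2) G(\gamma\mu(\gamma)^2/2), and D(\gamma) = \mu(\gamma) n(\gamma). Then for \delta > 1/2, D(\gamma)/\gamma^{1-\delta} -> 1 as \gamma -> \infty, while for \delta = 1/2, D(\gamma)/\sqrt{\gamma} -> 2G(1/2). In particular, among exponents \delta >= 0, the damage D(\gamma) grows at rate \Theta(\sqrt{\gamma}) when \delta = 1/2 and at a strictly slower polynomial rate \gamma^{1-\delta} for any \delta > 1/2. -/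
open Real Filter Topology Set

noncomputable def Tf (W : ℝ → ℝ) (x : ℝ) : ℝ := -1 - W (-Real.exp (-1 - x))

lemma key_props (W : ℝ → ℝ)
    (hW : ∀ z : ℝ, -Real.exp (-1) ≤ z → z < 0 → W z * Real.exp (W z) = z ∧ W z ≤ -1)
    {x : ℝ} (hx : 0 < x) :
    0 < Tf W x ∧ x = Tf W x - Real.log (1 + Tf W x) ∧
      G W x = (Tf W x) ^ 2 / (1 + Tf W x) - x := by
  set z : ℝ := -Real.exp (-1 - x) with hz
  have hz1 : -Real.exp (-1) ≤ z := by
    rw [hz, neg_le_neg_iff]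
    exact Real.exp_le_exp.2 (by linarith)
  have hz2 : z < 0 := by
    rw [hz, neg_neg_iff_pos]; positivity
  obtain ⟨heq, hle⟩ := hW z hz1 hz2
  set w : ℝ := W z with hwdef
  have hwlt : w < -1 := by
    rcases lt_or_eq_of_le hle with h | h
    · exact h
    · exfalso
      rw [h] at heq
      have : Real.exp (-1) = Real.exp (-1 - x) := by
        have := heq
        rw [hz] at this
        nlinarith [Real.exp_pos (-1 : ℝ), Real.exp_pos (-1 - x)]
      have := Real.exp_injective this
      linarith
  have ht : Tf W x = -1 - w := rfl
  have htpos : 0 < Tf W x := by rw [ht]; linarith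
  set t : ℝ := Tf W x with htd
  have h1t : 1 + t = -w := by rw [ht]; ring
  have h1tpos : (0:ℝ) < 1 + t := by linarith
  have hexpw : (1 + t) * Real.exp w = Real.exp (-1 - x) := by
    have : (-w) * Real.exp w = Real.exp (-1 - x) := by
      rw [hz] at heq; linarith [heq]
    rw [h1t]; exact this
  have hxeq : x = t - Real.log (1 + t) := by
    have hlog : Real.log ((1 + t) * Real.exp w) = Real.log (Real.exp (-1 - x)) := by
      rw [hexpw]
    rw [Real.log_mul (by positivity) (Real.exp_ne_zero _), Real.log_exp, Real.log_exp] at hlog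
    have : w = -1 - t := by rw [ht]; ring
    rw [this] at hlog
    linarith
  refine ⟨htpos, hxeq, ?_⟩
  have hexpw' : Real.exp w = Real.exp (-1 - x) / (1 + t) := by
    field_simp at hexpw ⊢
    linarith [hexpw]
  have hG : G W x = Real.exp (1 + x + w) - w - x - 2 := rfl
  have hE : Real.exp (1 + x + w) = 1 / (1 + t) := by
    rw [Real.exp_add, hexpw']
    rw [show (1 + x : ℝ) = -(-1 - x) by ring, Real.exp_neg]
    field_simp
  rw [hG, hE, show w = -1 - t by rw [ht]; ring]
  field_simp
  ring

lemma q_lim : Tendsto (fun t : ℝ => (t - Real.log (1 + t)) / t ^ 2) (𝓝[>] (0:ℝ)) (𝓝 (1/2)) := by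
  have h0 : Tendsto (fun t : ℝ => (t - Real.log (1 + t)) / t ^ 2 - 1/2) (𝓝[>] (0:ℝ)) (𝓝 0) := by
    refine squeeze_zero_norm' (a := fun t : ℝ => 2 * t) ?_ ?_
    · filter_upwards [Ioo_mem_nhdsGT_of_mem (by norm_num : (0:ℝ) ∈ Ico (0:ℝ) (1/2))]
        with t ht
      obtain ⟨ht0, ht1⟩ := ht
      have habs : |(-t : ℝ)| < 1 := by rw [abs_neg, abs_of_pos ht0]; linarith
      have this : |(-t + t^2/2) + Real.log (1 + t)| ≤ t^3 / (1 - t) := by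
        have h := Real.abs_log_sub_add_sum_range_le habs 2
        simp only [Finset.sum_range_succ, Finset.sum_range_zero] at h
        rw [abs_neg, abs_of_pos ht0] at h
        norm_num [sub_neg_eq_add] at h
        convert h using 2
      have ht2 : (0:ℝ) < t ^ 2 := by positivity
      have key : |(t - Real.log (1 + t)) / t ^ 2 - 1/2| ≤ (t^3 / (1 - t)) / t^2 := by
        have : (t - Real.log (1 + t)) / t ^ 2 - 1/2
            = -((-t + t^2/2 + Real.log (1 + t)) / t^2) := by
          field_simp
          ring
        rw [this, abs_neg, abs_div, abs_of_pos ht2]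
        gcongr
      have hfin : (t^3 / (1 - t)) / t^2 ≤ 2 * t := by
        rw [div_div, div_le_iff₀ (by nlinarith)]
        nlinarith [pow_pos ht0 3, pow_pos ht0 4]
      calc ‖(t - Real.log (1 + t)) / t ^ 2 - 1/2‖
          = |(t - Real.log (1 + t)) / t ^ 2 - 1/2| := rfl
        _ ≤ (t^3 / (1 - t)) / t^2 := key
        _ ≤ 2 * t := hfin
    · have h2 : Tendsto (fun t : ℝ => 2 * t) (𝓝 (0:ℝ)) (𝓝 (2 * 0)) :=
        (continuous_const.mul continuous_id).tendsto 0
      simpa using h2.mono_left nhdsWithin_le_nhds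
  have := h0.add (tendsto_const_nhds (x := (1/2:ℝ)))
  simpa using this

lemma den_strictmono {s u : ℝ} (hs : 0 ≤ s) (hsu : s < u) :
    s - Real.log (1 + s) < u - Real.log (1 + u) := by
  have h1s : (0:ℝ) < 1 + s := by linarith
  have h1u : (0:ℝ) < 1 + u := by linarith
  have hq : Real.log ((1 + u) / (1 + s)) < (1 + u) / (1 + s) - 1 := by
    apply Real.log_lt_sub_one_of_pos (by positivity)
    intro h
    have : (1 + u) = (1 + s) := by field_simp at h; linarith
    linarith
  rw [Real.log_div (by positivity) (by positivity)] at hq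
  have h2 : (1 + u) / (1 + s) - 1 = (u - s) / (1 + s) := by field_simp; ring
  have h3 : (u - s) / (1 + s) ≤ u - s := by
    apply div_le_self (by linarith) (by linarith)
  linarith [hq, h2 ▸ hq]

lemma T_lim (W : ℝ → ℝ)
    (hW : ∀ z : ℝ, -Real.exp (-1) ≤ z → z < 0 → W z * Real.exp (W z) = z ∧ W z ≤ -1) :
    Tendsto (Tf W) (𝓝[>] (0:ℝ)) (𝓝[>] (0:ℝ)) := by
  rw [tendsto_nhdsWithin_iff]
  constructor
  · rw [tendsto_order]
    constructor
    · intro a ha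
      filter_upwards [self_mem_nhdsWithin] with x hx
      exact lt_trans ha (key_props W hW hx).1
    · intro a ha
      have hda : 0 < a - Real.log (1 + a) := by
        have := Real.log_lt_sub_one_of_pos (show (0:ℝ) < 1 + a by linarith)
          (by intro h; linarith [h])
        linarith
      filter_upwards [Ioo_mem_nhdsGT_of_mem
        (show (0:ℝ) ∈ Ico (0:ℝ) (a - Real.log (1 + a)) from ⟨le_refl _, hda⟩)] with x hx
      obtain ⟨hx0, hxd⟩ := hx
      obtain ⟨htpos, hxeq, -⟩ := key_props W hW hx0
      by_contra hcon
      push_neg at hcon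
      rcases lt_or_eq_of_le hcon with h | h
      · have := den_strictmono (le_of_lt ha) h
        rw [← hxeq] at this
        linarith
      · rw [← h] at hxeq
        linarith
  · filter_upwards [self_mem_nhdsWithin] with x hx
    exact (key_props W hW hx).1

lemma R_lim : Tendsto (fun t : ℝ =>
    (t ^ 2 / (1 + t) - (t - Real.log (1 + t))) / (t - Real.log (1 + t)))
    (𝓝[>] (0:ℝ)) (𝓝 1) := by
  have hq := q_lim
  have hinv : Tendsto (fun t : ℝ => 1 / (1 + t)) (𝓝[>] (0:ℝ)) (𝓝 1) := by
    have : Tendsto (fun t : ℝ => 1 / (1 + t)) (𝓝 (0:ℝ)) (𝓝 (1 / (1 + 0))) := by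
      apply Tendsto.div tendsto_const_nhds
      · exact (continuous_const.add continuous_id).tendsto 0
      · norm_num
    simpa using this.mono_left nhdsWithin_le_nhds
  have hnum : Tendsto (fun t : ℝ => 1 / (1 + t) - (t - Real.log (1 + t)) / t ^ 2)
      (𝓝[>] (0:ℝ)) (𝓝 (1/2)) := by
    have := hinv.sub hq
    norm_num at this
    convert this using 2
    norm_num
  have hR := hnum.div hq (by norm_num)
  have heq : ∀ᶠ t in 𝓝[>] (0:ℝ),
      (1 / (1 + t) - (t - Real.log (1 + t)) / t ^ 2) / ((t - Real.log (1 + t)) / t ^ 2)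
        = (t ^ 2 / (1 + t) - (t - Real.log (1 + t))) / (t - Real.log (1 + t)) := by
    filter_upwards [self_mem_nhdsWithin] with t ht
    have ht0 : (0:ℝ) < t := ht
    have h1t : (0:ℝ) < 1 + t := by linarith
    have hden : 0 < t - Real.log (1 + t) := by
      have := Real.log_lt_sub_one_of_pos (show (0:ℝ) < 1 + t by linarith)
        (by intro h; linarith [h])
      linarith
    field_simp
  have := hR.congr' heq
  simpa using this

lemma Gdiv_lim (W : ℝ → ℝ)
    (hW : ∀ z : ℝ, -Real.exp (-1) ≤ z → z < 0 → W z * Real.exp (W z) = z ∧ W z ≤ -1) :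
    Tendsto (fun x : ℝ => G W x / x) (𝓝[>] (0:ℝ)) (𝓝 1) := by
  have hcomp := R_lim.comp (T_lim W hW)
  apply hcomp.congr'
  filter_upwards [self_mem_nhdsWithin] with x hx
  obtain ⟨htpos, hxeq, hGeq⟩ := key_props W hW (show (0:ℝ) < x from hx)
  simp only [Function.comp]
  rw [hGeq, ← hxeq]

theorem stmt16 (W : ℝ → ℝ) (hW : ∀ z : ℝ, -Real.exp (-1) ≤ z → z < 0 → W z * Real.exp (W z) = z ∧ W z ≤ -1) (δ : ℝ) (hδ0 : 0 ≤ δ) :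
    (1 / 2 < δ →
      Tendsto (fun γ : ℝ =>
          (γ ^ (-δ) * ((2 / (γ ^ (-δ)) ^ 2) * G W (γ * (γ ^ (-δ)) ^ 2 / 2))) /
            γ ^ (1 - δ)) atTop (𝓝 1)) ∧
    (δ = 1 / 2 →
      Tendsto (fun γ : ℝ =>
          (γ ^ (-δ) * ((2 / (γ ^ (-δ)) ^ 2) * G W (γ * (γ ^ (-δ)) ^ 2 / 2))) /
            Real.sqrt γ) atTop (𝓝 (2 * G W (1 / 2)))) := by
  constructor
  · intro hδ
    have hx : Tendsto (fun γ : ℝ => γ ^ (1 - 2*δ) / 2) atTop (𝓝[>] (0:ℝ)) := by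
      rw [tendsto_nhdsWithin_iff]
      constructor
      · have h1 : Tendsto (fun γ : ℝ => γ ^ (1 - 2*δ)) atTop (𝓝 0) := by
          have h := tendsto_rpow_neg_atTop (show (0:ℝ) < 2*δ - 1 by linarith)
          rw [show (1 - 2*δ : ℝ) = -(2*δ - 1) by ring]
          exact h
        simpa using h1.div_const 2
      · filter_upwards [eventually_gt_atTop (0:ℝ)] with γ hγ
        have := Real.rpow_pos_of_pos hγ (1 - 2*δ)
        exact div_pos this (by norm_num)
    have hcomp := (Gdiv_lim W hW).comp hx
    apply hcomp.congr'
    filter_upwards [eventually_gt_atTop (0:ℝ)] with γ hγ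
    have h2 : (γ ^ (-δ)) ^ 2 = γ ^ (-δ + -δ) := by
      rw [sq]; exact (Real.rpow_add hγ _ _).symm
    have harg : γ * γ ^ (-δ + -δ) = γ ^ (1 - 2*δ) := by
      nth_rewrite 1 [show γ = γ ^ (1:ℝ) by rw [Real.rpow_one]]
      rw [← Real.rpow_add hγ]
      ring_nf
    have hAD : γ ^ (-δ - δ) * γ ^ (1 - δ) = γ ^ (-δ) * γ ^ (1 - 2*δ) := by
      rw [← Real.rpow_add hγ, ← Real.rpow_add hγ]
      ring_nf
    have hp1 : (0:ℝ) < γ ^ (-δ + -δ) := Real.rpow_pos_of_pos hγ _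
    have hp2 : (0:ℝ) < γ ^ (1 - δ) := Real.rpow_pos_of_pos hγ _
    have hp3 : (0:ℝ) < γ ^ (1 - 2*δ) := Real.rpow_pos_of_pos hγ _
    simp only [Function.comp]
    rw [h2, harg]
    set g := G W (γ ^ (1 - 2*δ) / 2)
    field_simp
    rw [show (-δ - δ) = δ * (-1 + -1) by ring] at hAD
    linear_combination g * hAD
  · intro hδ
    subst hδ
    apply Tendsto.congr' _ (tendsto_const_nhds (x := 2 * G W (1/2)))
    filter_upwards [eventually_gt_atTop (0:ℝ)] with γ hγ
    have hγ0 : γ ≠ 0 := ne_of_gt hγ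
    have h2 : (γ ^ (-(1/2):ℝ)) ^ 2 = γ⁻¹ := by
      rw [sq, ← Real.rpow_add hγ, show (-(1/2) + -(1/2) : ℝ) = -1 by norm_num,
        Real.rpow_neg_one]
    have harg : γ * (γ ^ (-(1/2):ℝ)) ^ 2 / 2 = 1/2 := by
      rw [h2]
      field_simp
    have hcoef : 2 / (γ ^ (-(1/2):ℝ)) ^ 2 = 2 * γ := by
      rw [h2]
      field_simp
    have hsqrt : Real.sqrt γ = γ ^ ((1:ℝ)/2) := Real.sqrt_eq_rpow γ
    have hhalf : γ ^ (-(1/2):ℝ) * γ = γ ^ ((1/2):ℝ) := by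
      have h := Real.rpow_add hγ (-(1/2)) 1
      rw [Real.rpow_one, show (-(1/2) + 1 : ℝ) = 1/2 by norm_num] at h
      exact h.symm
    rw [harg, hcoef, hsqrt]
    have hp : γ ^ ((1/2):ℝ) ≠ 0 := ne_of_gt (Real.rpow_pos_of_pos hγ _)
    have hhalf' : γ ^ ((-1 : ℝ)/2) * γ = γ ^ ((1/2):ℝ) := by
      rw [show ((-1:ℝ)/2) = -(1/2) by norm_num]; exact hhalf
    field_simp
    linear_combination (-G W (1/2)) * hhalf
end

section
/- lim_{\theta -> 0^+} (2/\theta) G(\theta/2) = 1 and lim_{\theta -> \infty} (2/\theta)G(\theta/2) \cdot \theta / (2\log\theta) = 1, i.e., G(\theta/2) ~ \log\theta as \theta -> \infty. -/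
open Real Filter Topology Set

-- monotonicity of u - log u on [1, ∞)
lemma monoF {a b : ℝ} (ha : 1 ≤ a) (hab : a ≤ b) :
    a - Real.log a ≤ b - Real.log b := by
  have ha0 : (0:ℝ) < a := by linarith
  have hb0 : (0:ℝ) < b := by linarith
  have h := Real.log_le_sub_one_of_pos (show 0 < b / a by positivity)
  rw [Real.log_div (ne_of_gt hb0) (ne_of_gt ha0)] at h
  have h2 : (b - a) / a ≤ b - a := div_le_self (by linarith) ha
  have h3 : b / a - 1 = (b - a) / a := by field_simp
  linarith

lemma keyA (W : ℝ → ℝ)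
    (hW : ∀ z : ℝ, -Real.exp (-1) ≤ z → z < 0 → W z * Real.exp (W z) = z ∧ W z ≤ -1)
    (x : ℝ) (hx : 0 ≤ x) :
    1 ≤ -W (-Real.exp (-1 - x)) ∧
    (-W (-Real.exp (-1 - x))) - Real.log (-W (-Real.exp (-1 - x))) = 1 + x ∧
    G W x = Real.log (-W (-Real.exp (-1 - x))) + 1 / (-W (-Real.exp (-1 - x))) - 1 := by
  have hz1 : -Real.exp (-1) ≤ -Real.exp (-1 - x) := by
    have : Real.exp (-1 - x) ≤ Real.exp (-1) := Real.exp_le_exp.mpr (by linarith)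
    linarith
  have hz0 : -Real.exp (-1 - x) < 0 := neg_neg_iff_pos.mpr (Real.exp_pos _)
  obtain ⟨heq, hle⟩ := hW _ hz1 hz0
  set w := W (-Real.exp (-1 - x)) with hwdef
  have hw0 : w < 0 := by linarith
  have hwne : w ≠ 0 := ne_of_lt hw0
  have hu1 : 1 ≤ -w := by linarith
  have hew : Real.exp w = -Real.exp (-1 - x) / w := by
    rw [eq_div_iff hwne]; linarith [heq]
  have hlog : w = (-1 - x) - Real.log (-w) := by
    have h1 : (-Real.exp (-1 - x)) / w = Real.exp (-1 - x) / (-w) := by ring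
    have h2 : Real.log (Real.exp w) = (-1 - x) - Real.log (-w) := by
      rw [hew, h1, Real.log_div (ne_of_gt (Real.exp_pos _)) (by linarith), Real.log_exp]
    rwa [Real.log_exp] at h2
  refine ⟨hu1, by linarith, ?_⟩
  have hexp : Real.exp (1 + x + w) = 1 / (-w) := by
    rw [Real.exp_add, hew]
    have h2 : Real.exp (1 + x) * (-Real.exp (-1 - x) / w)
        = Real.exp (1 + x) * Real.exp (-1 - x) / (-w) := by ring
    rw [h2, ← Real.exp_add, show (1 + x) + (-1 - x) = (0:ℝ) by ring, Real.exp_zero]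
  show Real.exp (1 + x + w) - w - x - 2 = Real.log (-w) + 1 / (-w) - 1
  rw [hexp]
  linarith [hlog]

lemma uT1 (W : ℝ → ℝ)
    (hW : ∀ z : ℝ, -Real.exp (-1) ≤ z → z < 0 → W z * Real.exp (W z) = z ∧ W z ≤ -1) :
    Tendsto (fun x : ℝ => -W (-Real.exp (-1 - x))) (𝓝[>] 0) (𝓝[>] 1) := by
  rw [tendsto_nhdsWithin_iff]
  constructor
  · rw [tendsto_order]
    constructor
    · intro b hb
      filter_upwards [self_mem_nhdsWithin] with x hx
      have h := (keyA W hW x (le_of_lt hx)).1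
      linarith
    · intro b hb
      have hb0 : (0:ℝ) < b := by linarith
      have hδ : 0 < (b - Real.log b) - 1 := by
        have := Real.log_lt_sub_one_of_pos hb0 (by linarith)
        linarith
      filter_upwards [self_mem_nhdsWithin,
        mem_nhdsWithin_of_mem_nhds (gt_mem_nhds hδ)] with x hx hxδ
      obtain ⟨h1, h2, -⟩ := keyA W hW x (le_of_lt hx)
      by_contra hc
      push_neg at hc
      have := monoF (le_of_lt hb) hc
      linarith
  · filter_upwards [self_mem_nhdsWithin] with x hx
    obtain ⟨h1, h2, -⟩ := keyA W hW x (le_of_lt hx)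
    rw [Set.mem_Ioi]
    rcases eq_or_lt_of_le h1 with h | h
    · exfalso
      rw [← h] at h2
      simp at h2
      exact absurd h2 (ne_of_gt (Set.mem_Ioi.mp hx))
    · exact h

lemma uT2 (W : ℝ → ℝ)
    (hW : ∀ z : ℝ, -Real.exp (-1) ≤ z → z < 0 → W z * Real.exp (W z) = z ∧ W z ≤ -1) :
    Tendsto (fun θ : ℝ => -W (-Real.exp (-1 - θ / 2))) atTop atTop := by
  refine tendsto_atTop_mono' atTop (f₁ := fun θ : ℝ => 1 + θ / 2) ?_ ?_
  · filter_upwards [eventually_ge_atTop (0:ℝ)] with θ hθ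
    obtain ⟨h1, h2, -⟩ := keyA W hW (θ / 2) (by linarith)
    have hlog : 0 ≤ Real.log (-W (-Real.exp (-1 - θ / 2))) :=
      Real.log_nonneg h1
    linarith
  · exact tendsto_atTop_add_const_left _ 1 (tendsto_id.atTop_div_const two_pos)

lemma limD : Tendsto (fun u : ℝ => (Real.log u + 1 / u - 1) / (u - Real.log u - 1))
    (𝓝[>] (1:ℝ)) (𝓝 1) := by
  apply HasDerivAt.lhopital_zero_nhdsGT
    (f' := fun u : ℝ => 1 / u - 1 / u ^ 2) (g' := fun u : ℝ => 1 - 1 / u)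
  · filter_upwards [self_mem_nhdsWithin] with u hu
    have hu0 : (0:ℝ) < u := lt_trans one_pos (Set.mem_Ioi.mp hu)
    have h1 := Real.hasDerivAt_log (ne_of_gt hu0)
    have h2 := hasDerivAt_inv (ne_of_gt hu0)
    have h3 := (h1.add h2).sub_const 1
    convert h3 using 1
    · rfl
    · rfl
    · ext v; simp [one_div]
    · simp [one_div]; ring
  · filter_upwards [self_mem_nhdsWithin] with u hu
    have hu0 : (0:ℝ) < u := lt_trans one_pos (Set.mem_Ioi.mp hu)
    have h1 := Real.hasDerivAt_log (ne_of_gt hu0)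
    have h3 := ((hasDerivAt_id u).sub h1).sub_const 1
    convert h3 using 1
    · rfl
    · rfl
    · ext v; simp
    simp [one_div]
  · filter_upwards [self_mem_nhdsWithin] with u hu
    have hu1 : (1:ℝ) < u := Set.mem_Ioi.mp hu
    have : 1 / u < 1 := by rw [div_lt_one (by linarith)]; exact hu1
    intro h; linarith [this, h]
  · have hc : ContinuousAt (fun u : ℝ => Real.log u + 1 / u - 1) 1 := by
      have := (Real.continuousAt_log (one_ne_zero)).add
        (continuousAt_inv₀ (one_ne_zero (α := ℝ)))
      exact (this.congr (by filter_upwards with v; simp [one_div])).sub continuousAt_const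
    have := hc.tendsto.mono_left (nhdsWithin_le_nhds (s := Set.Ioi (1:ℝ)))
    simpa using this
  · have hc : ContinuousAt (fun u : ℝ => u - Real.log u - 1) 1 :=
      ((continuousAt_id.sub (Real.continuousAt_log one_ne_zero)).sub continuousAt_const)
    have := hc.tendsto.mono_left (nhdsWithin_le_nhds (s := Set.Ioi (1:ℝ)))
    simpa using this
  · have h1 : Tendsto (fun u : ℝ => 1 / u) (𝓝[>] (1:ℝ)) (𝓝 1) := by
      have := (continuousAt_inv₀ (one_ne_zero (α := ℝ))).tendsto.mono_left
        (nhdsWithin_le_nhds (s := Set.Ioi (1:ℝ)))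
      simp only [inv_one] at this
      exact this.congr (by intro v; simp [one_div])
    apply h1.congr'
    filter_upwards [self_mem_nhdsWithin] with u hu
    have hu1 : (1:ℝ) < u := Set.mem_Ioi.mp hu
    have hu0 : (0:ℝ) < u := by linarith
    have hne : 1 - 1 / u ≠ 0 := by
      have : 1 / u < 1 := by rw [div_lt_one hu0]; exact hu1
      intro h; linarith
    rw [eq_div_iff hne]
    field_simp

lemma log_bound (u : ℝ) (hu : 16 ≤ u) : Real.log u + 1 ≤ u / 2 := by
  have hu0 : (0:ℝ) < u := by linarith
  have hs := Real.log_le_sub_one_of_pos (Real.sqrt_pos.mpr hu0)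
  have hls : Real.log (Real.sqrt u) = Real.log u / 2 := Real.log_sqrt hu0.le
  have hsq : Real.sqrt u ^ 2 = u := Real.sq_sqrt hu0.le
  have h0 : 0 ≤ Real.sqrt u := Real.sqrt_nonneg u
  nlinarith [sq_nonneg (Real.sqrt u - 4)]

lemma limLower : Tendsto (fun u : ℝ => (Real.log u - 1) / (Real.log u + Real.log 2))
    atTop (𝓝 1) := by
  have base : Tendsto (fun t : ℝ => (t - 1) / (t + Real.log 2)) atTop (𝓝 1) := by
    have h0 : Tendsto (fun t : ℝ => (1 + Real.log 2) / (t + Real.log 2)) atTop (𝓝 0) :=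
      Tendsto.div_atTop tendsto_const_nhds
        (tendsto_atTop_add_const_right _ _ tendsto_id)
    have h1 := tendsto_const_nhds (α := ℝ) (x := (1:ℝ)) (f := atTop).sub h0
    rw [sub_zero] at h1
    apply h1.congr'
    filter_upwards [eventually_gt_atTop (-Real.log 2)] with t ht
    have hne : t + Real.log 2 ≠ 0 := by intro h; linarith
    field_simp
    ring
  have := base.comp Real.tendsto_log_atTop
  exact this.congr (fun u => rfl)

lemma limE : Tendsto
    (fun u : ℝ => (Real.log u + 1 / u - 1) / Real.log (2 * (u - Real.log u - 1)))
    atTop (𝓝 1) := by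
  apply tendsto_of_tendsto_of_tendsto_of_le_of_le' limLower tendsto_const_nhds
  · filter_upwards [eventually_ge_atTop (16:ℝ)] with u hu
    have hu0 : (0:ℝ) < u := by linarith
    have hlb := log_bound u hu
    have hlogu : 1 ≤ Real.log u := by
      rw [Real.le_log_iff_exp_le hu0]
      have := Real.exp_one_lt_d9
      linarith
    have hpos : u / 2 ≤ u - Real.log u - 1 := by linarith
    have hD_lb : Real.log u ≤ Real.log (2 * (u - Real.log u - 1)) :=
      Real.log_le_log hu0 (by linarith)
    have hD_ub : Real.log (2 * (u - Real.log u - 1)) ≤ Real.log u + Real.log 2 := by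
      have h1 : Real.log (2 * (u - Real.log u - 1)) ≤ Real.log (2 * u) :=
        Real.log_le_log (by linarith) (by nlinarith)
      rw [Real.log_mul two_ne_zero (ne_of_gt hu0)] at h1
      linarith
    have hD0 : 0 < Real.log (2 * (u - Real.log u - 1)) := by linarith
    have h1u : 0 < 1 / u := by positivity
    exact div_le_div₀ (by linarith) (by linarith) hD0 hD_ub
  · filter_upwards [eventually_ge_atTop (16:ℝ)] with u hu
    have hu0 : (0:ℝ) < u := by linarith
    have hlb := log_bound u hu
    have hlogu : 1 ≤ Real.log u := by
      rw [Real.le_log_iff_exp_le hu0]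
      have := Real.exp_one_lt_d9
      linarith
    have hD_lb : Real.log u ≤ Real.log (2 * (u - Real.log u - 1)) :=
      Real.log_le_log hu0 (by linarith)
    have hD0 : 0 < Real.log (2 * (u - Real.log u - 1)) := by linarith
    rw [div_le_one hD0]
    have h1u : 1 / u ≤ 1 := by rw [div_le_one hu0]; linarith
    linarith

theorem stmt18 (W : ℝ → ℝ) (hW : ∀ z : ℝ, -Real.exp (-1) ≤ z → z < 0 → W z * Real.exp (W z) = z ∧ W z ≤ -1) :
    Tendsto (fun θ : ℝ => (2 / θ) * G W (θ / 2)) (𝓝[>] 0) (𝓝 1) ∧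
    Tendsto (fun θ : ℝ => G W (θ / 2) / Real.log θ) atTop (𝓝 1) := by
  constructor
  · have hhalf : Tendsto (fun θ : ℝ => θ / 2) (𝓝[>] (0:ℝ)) (𝓝[>] (0:ℝ)) := by
      rw [tendsto_nhdsWithin_iff]
      constructor
      · have h : Tendsto (fun θ : ℝ => θ / 2) (𝓝 0) (𝓝 (0 / 2)) :=
          (tendsto_id (x := 𝓝 (0:ℝ))).div_const 2
        rw [zero_div] at h
        exact h.mono_left nhdsWithin_le_nhds
      · filter_upwards [self_mem_nhdsWithin] with θ hθ
        exact Set.mem_Ioi.mpr (by linarith [Set.mem_Ioi.mp hθ])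
    have hcomp := (uT1 W hW).comp hhalf
    apply (limD.comp hcomp).congr'
    filter_upwards [self_mem_nhdsWithin] with θ hθ
    have hθ0 : 0 < θ := Set.mem_Ioi.mp hθ
    obtain ⟨h1, h2, h3⟩ := keyA W hW (θ / 2) (by linarith)
    simp only [Function.comp_apply]
    rw [h3]
    have h4 : -W (-Real.exp (-1 - θ / 2)) - Real.log (-W (-Real.exp (-1 - θ / 2))) - 1
        = θ / 2 := by linarith
    rw [h4]
    have hne : θ ≠ 0 := ne_of_gt hθ0
    have hune : -W (-Real.exp (-1 - θ / 2)) ≠ 0 := by intro h; rw [h] at h1; linarith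
    field_simp
  · apply (limE.comp (uT2 W hW)).congr'
    filter_upwards [eventually_ge_atTop (1:ℝ)] with θ hθ
    obtain ⟨h1, h2, h3⟩ := keyA W hW (θ / 2) (by linarith)
    simp only [Function.comp_apply]
    rw [h3]
    have h4 : 2 * (-W (-Real.exp (-1 - θ / 2)) - Real.log (-W (-Real.exp (-1 - θ / 2))) - 1)
        = θ := by linarith
    rw [h4]
end
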